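/- The quadratic form f(x) = −β x₀² + x₁² + x₂² + x₃² + x₄² + x₅², where β = −1 + 2√5, is anisotropic over ℚ(√5): if x₀, …, x₅ ∈ ℚ(√5) satisfy −β x₀² + x₁² + ⋯ + x₅² = 0, then x₀ = x₁ = ⋯ = x₅ = 0. -/

import Mathlib

/-!
The embedding of `ℚ(√5)` into `ℝ` sending `√5 ↦ -√5` carries `β = -1 + 2√5` to `-1 - 2√5 < 0`,
so it maps a zero of `f` to a zero of the positive definite real form
`(1 + 2√5) y₀² + y₁² + ⋯ + y₅²`, which must be trivial; since a field embedding is injective,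
the original zero is trivial as well.
-/

/-- The real quadratic field `K = ℚ(√5)`, as a subfield of `ℝ`. -/
noncomputable def K : IntermediateField ℚ ℝ := IntermediateField.adjoin ℚ {Real.sqrt 5}

open Polynomial IntermediateField

lemma rat_sq_ne_five (b : ℚ) : b ^ 2 ≠ 5 := by
  intro hb
  have hirr : Irrational √5 := by norm_num
  refine hirr ⟨|b|, ?_⟩
  rw [Rat.cast_abs, ← Real.sqrt_sq_eq_abs]
  exact_mod_cast congrArg Real.sqrt (congrArg ((↑) : ℚ → ℝ) hb)

lemma minpoly_sqrt_five : minpoly ℚ √5 = X ^ 2 - C 5 :=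
  (minpoly.eq_of_irreducible_of_monic
    (X_pow_sub_C_irreducible_of_prime Nat.prime_two rat_sq_ne_five)
    (by simp [Real.sq_sqrt]) (monic_X_pow_sub_C _ two_ne_zero)).symm

lemma isIntegral_sqrt_five : IsIntegral ℚ √5 :=
  ⟨X ^ 2 - C 5, monic_X_pow_sub_C _ two_ne_zero, by simp [Real.sq_sqrt]⟩

lemma neg_sqrt_five_mem_aroots : -√5 ∈ (minpoly ℚ √5).aroots ℝ := by
  simp [minpoly_sqrt_five, X_pow_sub_C_ne_zero, Real.sq_sqrt]

lemma eq_zero_of_sum_mul_sq_eq_zero {R ι : Type*} [CommRing R] [LinearOrder R]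
    [IsStrictOrderedRing R] [Fintype ι] {w y : ι → R} (hw : ∀ i, 0 < w i)
    (h : ∑ i, w i * y i ^ 2 = 0) (i : ι) : y i = 0 := by
  have hterm : w i * y i ^ 2 = 0 :=
    (Finset.sum_eq_zero_iff_of_nonneg fun j _ => mul_nonneg (hw j).le (sq_nonneg (y j))).1 h i
      (Finset.mem_univ i)
  exact pow_eq_zero_iff two_ne_zero |>.1 ((mul_eq_zero.1 hterm).resolve_left (hw i).ne')

namespace K

lemma sqrt_five_mem : √5 ∈ K := mem_adjoin_simple_self ℚ √5

noncomputable def conj : K →ₐ[ℚ] ℝ :=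
  (algHomAdjoinIntegralEquiv ℚ isIntegral_sqrt_five).symm ⟨-√5, neg_sqrt_five_mem_aroots⟩

lemma conj_sqrt_five : conj ⟨√5, sqrt_five_mem⟩ = -√5 :=
  algHomAdjoinIntegralEquiv_symm_apply_gen ℚ isIntegral_sqrt_five _

end K

/-- The quadratic form `f(x) = -β x₀² + x₁² + ⋯ + x₅²`, with `β = -1 + 2√5`, is
anisotropic over `ℚ(√5)`: any solution of `f(x) = 0` with all coordinates in `ℚ(√5)`
is trivial. -/
theorem stmt_18 :
    ∀ x : Fin 6 → ℝ, (∀ i, x i ∈ K) →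
      -(-1 + 2 * Real.sqrt 5) * x 0 ^ 2 + x 1 ^ 2 + x 2 ^ 2 + x 3 ^ 2 + x 4 ^ 2 + x 5 ^ 2 = 0 →
      ∀ i, x i = 0 := by
  intro x hx h i
  set y : Fin 6 → K := fun j => ⟨x j, hx j⟩
  have hK : -(-1 + 2 * ⟨√5, K.sqrt_five_mem⟩) * y 0 ^ 2 + y 1 ^ 2 + y 2 ^ 2 + y 3 ^ 2
      + y 4 ^ 2 + y 5 ^ 2 = 0 := Subtype.ext <| by
    have h2 : ((2 : K) : ℝ) = 2 := map_ofNat K.val 2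
    simpa [y, h2] using h
  have hconj := congrArg K.conj hK
  simp only [map_add, map_mul, map_neg, map_one, map_ofNat, map_pow, map_zero,
    K.conj_sqrt_five] at hconj
  have hw : ∀ j, 0 < ![1 + 2 * √5, 1, 1, 1, 1, 1] j := by
    intro j
    fin_cases j <;> simp; positivity
  have hconj_zero : K.conj (y i) = 0 :=
    eq_zero_of_sum_mul_sq_eq_zero hw (y := fun j => K.conj (y j))
      (by simp [Fin.sum_univ_six]; linear_combination hconj) i
  exact congrArg Subtype.val ((map_eq_zero_iff K.conj K.conj.toRingHom.injective).1 hconj_zero)
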